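/- Let G be a simple graph on d ≥ 1 vertices and cr(G) its corona. Then every minimal monomial generator of J(cr(G))^(n) has degree exactly dn, for all n ≥ 1. -/

import Mathlib

/-!
Minimality forces tightness: lowering a positive exponent `α u` by one must break the
condition on some edge, which then passes through `u` and satisfies `α u + α v = n`.
For a pendant vertex `v` with neighbour `u` this gives `α u + α v = n` (if `α v = 0`, a
tight edge at `u` shows `α u ≤ n`). In the corona every vertex `inl i` of `G` carries the
pendant vertex `inr i`, and the `d` pendant edges partition the vertex set.
-/

/-- The corona `cr(G)` of a graph `G` on `Fin d`: attach one pendant vertex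
`Sum.inr i` to each vertex `Sum.inl i` of `G`. -/
def corona {d : ℕ} (G : SimpleGraph (Fin d)) : SimpleGraph (Fin d ⊕ Fin d) where
  Adj u v :=
    match u, v with
    | Sum.inl i, Sum.inl j => G.Adj i j
    | Sum.inl i, Sum.inr j => i = j
    | Sum.inr i, Sum.inl j => i = j
    | Sum.inr _, Sum.inr _ => False
  symm := by
    constructor
    rintro (i | i) (j | j) h
    · exact G.adj_symm h
    · exact h.symm
    · exact h.symm
    · exact h.elim
  loopless := by
    constructor
    rintro (i | i) h
    · exact G.loopless.irrefl i h
    · exact h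

/-- Monomial membership in the `n`-th symbolic power of the cover ideal:
`x^α ∈ J(G)⁽ⁿ⁾ = ⋂_{ij ∈ E(G)} (xᵢ,xⱼ)ⁿ` iff `α i + α j ≥ n` for every edge `ij`. -/
def memSymbCover {V : Type*} (G : SimpleGraph V) (n : ℕ) (α : V → ℕ) : Prop :=
  ∀ i j, G.Adj i j → n ≤ α i + α j

/-- `x^α` is a minimal monomial generator of `J(G)⁽ⁿ⁾`. -/
def isMinGenSymbCover {V : Type*} (G : SimpleGraph V) (n : ℕ) (α : V → ℕ) : Prop :=
  memSymbCover G n α ∧ ∀ β : V → ℕ, β ≤ α → β ≠ α → ¬ memSymbCover G n β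

namespace isMinGenSymbCover

variable {V : Type*} {G : SimpleGraph V} {n : ℕ} {α : V → ℕ}

theorem exists_adj_add_eq [DecidableEq V] (hα : isMinGenSymbCover G n α) {u : V}
    (hu : 0 < α u) : ∃ v, G.Adj u v ∧ α u + α v = n := by
  set β := Function.update α u (α u - 1)
  have hβα : β ≤ α := by
    intro w
    by_cases hw : w = u
    · subst hw; simp [β]
    · simp [β, hw]
  have hβne : β ≠ α := fun h => by
    have := congrFun h u
    simp only [β, Function.update_self] at this
    omega
  obtain ⟨i, j, hij, hlt⟩ : ∃ i j, G.Adj i j ∧ β i + β j < n := by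
    simpa [memSymbCover] using hα.2 β hβα hβne
  have hge := hα.1 i j hij
  simp only [β, Function.update_apply] at hlt
  split_ifs at hlt with hi hj hj
  · exact absurd (hi.trans hj.symm) (G.ne_of_adj hij)
  · subst hi; exact ⟨j, hij, by omega⟩
  · subst hj; exact ⟨i, hij.symm, by omega⟩
  · omega

theorem add_eq_of_pendant [DecidableEq V] (hα : isMinGenSymbCover G n α) {u v : V}
    (hv : ∀ w, G.Adj v w ↔ w = u) : α u + α v = n := by
  have hge : n ≤ α u + α v := hα.1 u v (G.adj_symm ((hv u).2 rfl))
  rcases Nat.eq_zero_or_pos (α v) with hv0 | hvpos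
  · rcases Nat.eq_zero_or_pos (α u) with hu0 | hupos
    · omega
    · obtain ⟨w, -, hw⟩ := hα.exists_adj_add_eq hupos
      omega
  · obtain ⟨w, hvw, hw⟩ := hα.exists_adj_add_eq hvpos
    rw [(hv w).1 hvw] at hw
    omega

end isMinGenSymbCover

theorem corona_adj_inr_iff {d : ℕ} (G : SimpleGraph (Fin d)) (i : Fin d) (w : Fin d ⊕ Fin d) :
    (corona G).Adj (Sum.inr i) w ↔ w = Sum.inl i := by
  rcases w with j | j
  · exact ⟨fun h => congrArg Sum.inl h.symm, fun h => (Sum.inl_injective h).symm⟩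
  · exact ⟨False.elim, fun h => absurd h Sum.inr_ne_inl⟩

theorem minGen_symbolic_power_cover_corona_degree_general
    {d : ℕ} (G : SimpleGraph (Fin d))
    (n : ℕ)
    (α : (Fin d ⊕ Fin d) → ℕ)
    (hα : isMinGenSymbCover (corona G) n α) :
    ∑ u, α u = d * n := by
  have hpair (i : Fin d) : α (Sum.inl i) + α (Sum.inr i) = n :=
    hα.add_eq_of_pendant (corona_adj_inr_iff G i)
  calc ∑ u, α u = ∑ i, (α (Sum.inl i) + α (Sum.inr i)) := by
        rw [Fintype.sum_sum_type, Finset.sum_add_distrib]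
    _ = d * n := by simp [hpair]

/-- for a graph `G` on `d ≥ 1` vertices, every minimal monomial
generator of `J(cr(G))⁽ⁿ⁾` has degree exactly `d·n`, for all `n ≥ 1`. -/
theorem minGen_symbolic_power_cover_corona_degree
    {d : ℕ} (hd : 1 ≤ d) (G : SimpleGraph (Fin d))
    (n : ℕ) (hn : 1 ≤ n)
    (α : (Fin d ⊕ Fin d) → ℕ)
    (hα : isMinGenSymbCover (corona G) n α) :
    ∑ u, α u = d * n :=
  minGen_symbolic_power_cover_corona_degree_general G n α hα
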